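/- arXiv:1810.03483 — 4 statements merged into one kernel-verified Lean document; each statement's English description precedes it below -/
import Mathlib

section
/- Let a, ε ∈ ℝ with a > 0 and 0 < ε < 1. Then for every z > 0, a·ln(a/z) − (a − z) − a·(ε + ln(1 − ε)) ≥ ε·|z − a|. -/
/-!
`φ z = a log (a / z) - (a - z)` is convex in `z`, and its supporting line of slope `1 - c`
(touching at `z = a / c`) gives `φ z ≥ a log c + a (1 - c) + (1 - c) (z - a)`. The slope `ε`
(`c = 1 - ε`) bounds `ε (z - a)` exactly; the slope `-ε` (`c = 1 + ε`) bounds `ε (a - z)` up to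
`log (1 + ε) - log (1 - ε) ≥ 2 ε`, the first term of the power series of the left side.
-/

open Real

lemma add_sub_mul_le_log_div_sub {a c z : ℝ} (ha : 0 < a) (hc : 0 < c) (hz : 0 < z) :
    a * log c + a * (1 - c) + (1 - c) * (z - a) ≤ a * log (a / z) - (a - z) := by
  have hlog : log (c * z / a) = log c - log (a / z) := by
    rw [← log_div (by positivity) (by positivity)]
    congr 1
    field_simp
  have htangent : a * log (c * z / a) ≤ c * z - a := by
    have := mul_le_mul_of_nonneg_left (log_le_sub_one_of_pos (by positivity : 0 < c * z / a)) ha.le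
    rwa [mul_sub, mul_div_cancel₀ _ ha.ne', mul_one] at this
  rw [hlog] at htangent
  linarith

lemma two_mul_le_log_one_add_sub_log_one_sub {x : ℝ} (hx0 : 0 ≤ x) (hx1 : x < 1) :
    2 * x ≤ log (1 + x) - log (1 - x) := by
  have hsum := hasSum_log_sub_log_of_abs_lt_one (abs_lt.mpr ⟨by linarith, hx1⟩)
  simpa using le_hasSum hsum 0 fun k _ => by positivity

/-- For `a > 0`, `0 < ε < 1` and every `z > 0`,
`a ln(a/z) − (a − z) − a(ε + ln(1 − ε)) ≥ ε |z − a|`. -/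
theorem entropy_inequality
    (a ε : ℝ) (ha : 0 < a) (hε0 : 0 < ε) (hε1 : ε < 1) :
    ∀ z : ℝ, 0 < z →
      ε * |z - a| ≤ a * Real.log (a / z) - (a - z) - a * (ε + Real.log (1 - ε)) := by
  intro z hz
  have above := add_sub_mul_le_log_div_sub ha (by linarith : 0 < 1 - ε) hz
  have below := add_sub_mul_le_log_div_sub ha (by linarith : 0 < 1 + ε) hz
  have hlog := mul_le_mul_of_nonneg_left
    (two_mul_le_log_one_add_sub_log_one_sub hε0.le hε1) ha.le
  have hbound : |ε * (z - a)| ≤ a * log (a / z) - (a - z) - a * (ε + log (1 - ε)) :=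
    abs_le'.mpr ⟨by linarith, by linarith⟩
  rwa [abs_mul, abs_of_pos hε0] at hbound
end

section
/- Fix N ≥ 1 and k > 0, and let G : ℝ^N → ℝ^N be differentiable with each component G_i : ℝ^N → ℝ convex. Let (M, U), (Θ, V) ∈ ℝ^N × ℝ^N with M = (m_1,…,m_N), Θ = (θ_1,…,θ_N), all m_i > 0 and θ_i > 0, and (1/N)Σ_{i=1}^N m_i = (1/N)Σ_{i=1}^N θ_i = 1. Then the Euclidean inner product ⟨F̃(M,U) − F̃(Θ,V), (M,U) − (Θ,V)⟩ ≥ 0. -/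
/-- The discrete entropy-penalized effective Hamiltonian
`H̃(M,U) = (∑ᵢ (mᵢ Gᵢ(U) − (1/k) mᵢ ln mᵢ)) / (∑ᵢ mᵢ)`. -/
noncomputable def Htilde {N : ℕ} (k : ℝ) (G : (Fin N → ℝ) → (Fin N → ℝ))
    (M U : Fin N → ℝ) : ℝ :=
  (∑ i, (M i * G U i - (1 / k) * (M i * Real.log (M i)))) / ∑ i, M i

/-- First block of `F̃(M,U)`: `(−Gᵢ(U) + H̃(M,U) + (1/k) ln mᵢ)ᵢ`. -/
noncomputable def Ftilde1 {N : ℕ} (k : ℝ) (G : (Fin N → ℝ) → (Fin N → ℝ))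
    (M U : Fin N → ℝ) (i : Fin N) : ℝ :=
  -(G U i) + Htilde k G M U + (1 / k) * Real.log (M i)

/-- Second block of `F̃(M,U)` (and of `F̄(M,U)`): the vector `DG(U)ᵀ M`. -/
noncomputable def Ftilde2 {N : ℕ} (G : (Fin N → ℝ) → (Fin N → ℝ))
    (M U : Fin N → ℝ) (j : Fin N) : ℝ :=
  ∑ i, M i * (fderiv ℝ G U) (Pi.single j 1) i

/-!
Since `M` and `Θ` have the same total mass, the `H̃` terms cancel. The rest splits into the
entropy part `k⁻¹ ∑ᵢ (mᵢ - θᵢ)(ln mᵢ - ln θᵢ)`, nonnegative because `ln` is increasing, and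
`∑ᵢ mᵢ (Gᵢ(V) - Gᵢ(U) - DGᵢ(U)(V - U)) + ∑ᵢ θᵢ (Gᵢ(U) - Gᵢ(V) - DGᵢ(V)(U - V))`, a positive
combination of first-order convexity gaps of the `Gᵢ`.
-/

open Matrix Set

theorem ConvexOn.add_fderiv_sub_le {E : Type*} [NormedAddCommGroup E] [NormedSpace ℝ E]
    {s : Set E} {f : E → ℝ} {f' : E →L[ℝ] ℝ} {x y : E} (hf : ConvexOn ℝ s f)
    (hx : x ∈ s) (hy : y ∈ s) (hf' : HasFDerivAt f f' x) :
    f x + f' (y - x) ≤ f y := by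
  have hline : ConvexOn ℝ (Icc 0 1) (f ∘ AffineMap.lineMap (k := ℝ) x y) :=
    (hf.comp_affineMap _).subset (fun t ht => hf.1.lineMap_mem hx hy ht)
      (convex_Icc 0 1)
  have hderiv : HasDerivAt (f ∘ AffineMap.lineMap (k := ℝ) x y) (f' (y - x)) 0 := by
    have hf'' : HasFDerivAt f f' (AffineMap.lineMap (k := ℝ) x y 0) := by simpa using hf'
    exact hf''.comp_hasDerivAt 0 AffineMap.hasDerivAt_lineMap
  have := hline.le_slope_of_hasDerivAt (by simp) (by simp) one_pos hderiv
  simp only [slope_def_field, Function.comp_apply, AffineMap.lineMap_apply_zero,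
    AffineMap.lineMap_apply_one, sub_zero, div_one] at this
  linarith

theorem add_fderiv_sub_le_apply_of_convexOn {E ι : Type*} [NormedAddCommGroup E]
    [NormedSpace ℝ E] [Fintype ι] {s : Set E} {G : E → ι → ℝ} {x y : E}
    (hG : ∀ i, ConvexOn ℝ s (fun z => G z i)) (hx : x ∈ s) (hy : y ∈ s)
    (hd : DifferentiableAt ℝ G x) (i : ι) :
    G x i + fderiv ℝ G x (y - x) i ≤ G y i :=
  (hG i).add_fderiv_sub_le hx hy (hasFDerivAt_pi'.1 hd.hasFDerivAt i)

theorem sub_mul_log_sub_log_nonneg {a b : ℝ} (ha : 0 < a) (hb : 0 < b) :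
    0 ≤ (a - b) * (Real.log a - Real.log b) := by
  rcases le_total a b with h | h
  · exact mul_nonneg_of_nonpos_of_nonpos (by linarith) (by linarith [Real.log_le_log ha h])
  · exact mul_nonneg (by linarith) (by linarith [Real.log_le_log hb h])

section Ftilde

variable {N : ℕ} (k : ℝ) (G : (Fin N → ℝ) → (Fin N → ℝ)) (M U Θ V : Fin N → ℝ)

theorem Ftilde2_eq_vecMul :
    Ftilde2 G M U = M ᵥ* LinearMap.toMatrix' (fderiv ℝ G U : (Fin N → ℝ) →ₗ[ℝ] Fin N → ℝ) :=
  rfl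

theorem sum_Ftilde2_sub_mul_sub :
    ∑ j, (Ftilde2 G M U j - Ftilde2 G Θ V j) * (U j - V j)
      = M ⬝ᵥ fderiv ℝ G U (U - V) - Θ ⬝ᵥ fderiv ℝ G V (U - V) := by
  change (Ftilde2 G M U - Ftilde2 G Θ V) ⬝ᵥ (U - V) = _
  rw [Ftilde2_eq_vecMul, Ftilde2_eq_vecMul, sub_dotProduct, ← dotProduct_mulVec,
    ← dotProduct_mulVec, LinearMap.toMatrix'_mulVec, LinearMap.toMatrix'_mulVec]
  rfl

variable {M Θ} in
theorem sum_Ftilde1_sub_mul_sub (hsum : ∑ i, M i = ∑ i, Θ i) :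
    ∑ i, (Ftilde1 k G M U i - Ftilde1 k G Θ V i) * (M i - Θ i)
      = ∑ i, (G V i - G U i + k⁻¹ * (Real.log (M i) - Real.log (Θ i))) * (M i - Θ i) := by
  have hcancel : ∑ i, (Htilde k G M U - Htilde k G Θ V) * (M i - Θ i) = 0 := by
    rw [← Finset.mul_sum, Finset.sum_sub_distrib, hsum, sub_self, mul_zero]
  rw [← sub_eq_zero, ← Finset.sum_sub_distrib, ← hcancel]
  refine Finset.sum_congr rfl fun i _ => ?_
  simp only [Ftilde1]
  ring

end Ftilde

theorem Ftilde_monotone_general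
    (N : ℕ) (k : ℝ) (hk : 0 < k)
    (G : (Fin N → ℝ) → (Fin N → ℝ))
    (hGdiff : Differentiable ℝ G)
    (hGconv : ∀ i : Fin N, ConvexOn ℝ Set.univ (fun U => G U i))
    (M U Θ V : Fin N → ℝ)
    (hM : ∀ i, 0 < M i) (hΘ : ∀ i, 0 < Θ i)
    (hMmass : (1 / (N : ℝ)) * ∑ i, M i = 1)
    (hΘmass : (1 / (N : ℝ)) * ∑ i, Θ i = 1) :
    0 ≤ (∑ i, (Ftilde1 k G M U i - Ftilde1 k G Θ V i) * (M i - Θ i))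
        + ∑ j, (Ftilde2 G M U j - Ftilde2 G Θ V j) * (U j - V j) := by
  have hsum : ∑ i, M i = ∑ i, Θ i :=
    mul_left_cancel₀ (left_ne_zero_of_mul_eq_one hMmass) (hMmass.trans hΘmass.symm)
  rw [sum_Ftilde1_sub_mul_sub k G U V hsum, sum_Ftilde2_sub_mul_sub, dotProduct, dotProduct,
    ← Finset.sum_sub_distrib, ← Finset.sum_add_distrib]
  refine Finset.sum_nonneg fun i _ => ?_
  have hU := add_fderiv_sub_le_apply_of_convexOn hGconv (mem_univ U) (mem_univ V) (hGdiff U) i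
  have hV := add_fderiv_sub_le_apply_of_convexOn hGconv (mem_univ V) (mem_univ U) (hGdiff V) i
  rw [← neg_sub U V, map_neg, Pi.neg_apply] at hU
  have hlog := mul_nonneg (inv_nonneg.2 hk.le) (sub_mul_log_sub_log_nonneg (hM i) (hΘ i))
  linarith [mul_nonneg (hM i).le (sub_nonneg.2 hU), mul_nonneg (hΘ i).le (sub_nonneg.2 hV)]

/-- `F̃` is a monotone operator on the set of positive measures of mean 1:
`⟨F̃(M,U) − F̃(Θ,V), (M,U) − (Θ,V)⟩ ≥ 0`. -/
theorem Ftilde_monotone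
    (N : ℕ) (hN : 1 ≤ N) (k : ℝ) (hk : 0 < k)
    (G : (Fin N → ℝ) → (Fin N → ℝ))
    (hGdiff : Differentiable ℝ G)
    (hGconv : ∀ i : Fin N, ConvexOn ℝ Set.univ (fun U => G U i))
    (M U Θ V : Fin N → ℝ)
    (hM : ∀ i, 0 < M i) (hΘ : ∀ i, 0 < Θ i)
    (hMmass : (1 / (N : ℝ)) * ∑ i, M i = 1)
    (hΘmass : (1 / (N : ℝ)) * ∑ i, Θ i = 1) :
    0 ≤ (∑ i, (Ftilde1 k G M U i - Ftilde1 k G Θ V i) * (M i - Θ i))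
        + ∑ j, (Ftilde2 G M U j - Ftilde2 G Θ V j) * (U j - V j) :=
  Ftilde_monotone_general N k hk G hGdiff hGconv M U Θ V hM hΘ hMmass hΘmass
end

section
/- Fix an integer N ≥ 1, let h = 1/N, P ∈ ℝ, x_j = j/N, and index vectors cyclically by j ∈ ℤ/Nℤ. For U = (u_j) ∈ ℝ^N define G_j(U) = (1/2)(min{P + (u_{j+1} − u_j)/h, 0})² + (1/2)(max{P + (u_j − u_{j−1})/h, 0})² − sin(2π x_j). Then each G_j is differentiable on ℝ^N, and for all U, V ∈ ℝ^N: Σ_{j} (G_j(U) − G_j(V) − ⟨∇G_j(V), U − V⟩) = (1/2) Σ_{j} ((u_j − u_{j−1})/h − (v_j − v_{j−1})/h)². In particular, Σ_{j} ((u_j − u_{j+1})/h − (v_j − v_{j+1})/h)² ≤ 2 Σ_{j} (G_j(U) − G_j(V) − ⟨∇G_j(V), U − V⟩), i.e. the numerical Poincaré inequality holds with constant ϱ = 2. -/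
/-- The discretized Hamiltonian `G_j` of the 1-d quadratic Hamiltonian
`H(x,p) = |p|²/2 − sin(2πx)` on a cyclic grid with `N` points and mesh size `h`. -/
noncomputable def discreteG (N : ℕ) [NeZero N] (h P : ℝ) (j : ZMod N)
    (U : ZMod N → ℝ) : ℝ :=
  (1 / 2) * (min (P + (U (j + 1) - U j) / h) 0) ^ 2
    + (1 / 2) * (max (P + (U j - U (j - 1)) / h) 0) ^ 2
    - Real.sin (2 * Real.pi * ((j.val : ℝ) / N))

/-! With `φ t = (min t 0)² / 2` and `ψ t = (max t 0)² / 2` one has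
`G_j(U) = φ(D_j U) + ψ(D_{j-1} U) - sin(2π x_j)` for the affine map `D_j U = P + (u_{j+1} - u_j)/h`.
Both `φ` and `ψ` are differentiable, with derivatives `min t 0` and `max t 0` (for `φ` because its Bregman
divergence is at most `(x - y)² / 2`, and `ψ = t² / 2 - φ`), so the Bregman divergence of
`G_j` is that of `φ` along `D_j` plus that of `ψ` along `D_{j-1}`. Summing over the cycle and
shifting the index of the `ψ`-terms pairs them up, and as `φ + ψ = t² / 2` each pair is the Bregman
divergence `(D_j U - D_j V)² / 2` of the square. -/

open Asymptotics Filter Finset ContinuousLinearMap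

theorem hasDerivAt_of_abs_sub_sub_le_sq {f : ℝ → ℝ} {f' x C : ℝ}
    (hf : ∀ y, |f y - f x - f' * (y - x)| ≤ C * (y - x) ^ 2) : HasDerivAt f f' x := by
  rw [hasDerivAt_iff_isLittleO]
  refine IsBigO.trans_isLittleO ?_ (isLittleO_pow_sub_sub x one_lt_two)
  refine IsBigO.of_bound C (Eventually.of_forall fun y => ?_)
  simpa [Real.norm_eq_abs, sq_abs, smul_eq_mul, mul_comm] using hf y

def bregman (f f' : ℝ → ℝ) (x y : ℝ) : ℝ := f x - f y - f' y * (x - y)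

lemma abs_bregman_half_sq_min_zero_le (x y : ℝ) :
    |bregman (fun t => 1 / 2 * min t 0 ^ 2) (fun t => min t 0) x y| ≤ 1 / 2 * (x - y) ^ 2 := by
  rw [bregman, abs_le]
  constructor <;>
    rcases le_total x 0 with hx | hx <;> rcases le_total y 0 with hy | hy <;>
    simp only [min_eq_left, min_eq_right, hx, hy] <;> nlinarith

lemma hasDerivAt_half_sq_min_zero (x : ℝ) :
    HasDerivAt (fun t : ℝ => 1 / 2 * min t 0 ^ 2) (min x 0) x :=
  hasDerivAt_of_abs_sub_sub_le_sq fun y => abs_bregman_half_sq_min_zero_le y x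

lemma sq_min_zero_add_sq_max_zero (x : ℝ) : min x 0 ^ 2 + max x 0 ^ 2 = x ^ 2 := by
  linear_combination (min x 0 + max x 0 + x) * min_add_max x 0 - 2 * min_mul_max x 0

lemma hasDerivAt_half_sq_max_zero (x : ℝ) :
    HasDerivAt (fun t : ℝ => 1 / 2 * max t 0 ^ 2) (max x 0) x := by
  have h := ((hasDerivAt_pow 2 x).const_mul (1 / 2)).sub (hasDerivAt_half_sq_min_zero x)
  refine (h.congr_deriv ?_).congr_of_eventuallyEq (Eventually.of_forall fun t => ?_)
  · linear_combination -min_add_max x 0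
  · simp only [Pi.sub_apply]
    linear_combination (1 / 2 : ℝ) * sq_min_zero_add_sq_max_zero t

lemma bregman_half_sq_min_zero_add_max_zero (x y : ℝ) :
    bregman (fun t => 1 / 2 * min t 0 ^ 2) (fun t => min t 0) x y
      + bregman (fun t => 1 / 2 * max t 0 ^ 2) (fun t => max t 0) x y = 1 / 2 * (x - y) ^ 2 := by
  simp only [bregman]
  linear_combination (1 / 2 : ℝ) * sq_min_zero_add_sq_max_zero x
    - (1 / 2 : ℝ) * sq_min_zero_add_sq_max_zero y - (x - y) * min_add_max y 0

lemma hasFDerivAt_comp_slope {ι : Type*} [Fintype ι] {f : ℝ → ℝ} {f' P h : ℝ}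
    {i k : ι} {V : ι → ℝ} (hf : HasDerivAt f f' (P + (V i - V k) / h)) :
    HasFDerivAt (fun U : ι → ℝ => f (P + (U i - U k) / h))
      (f' • h⁻¹ • ((proj i : (ι → ℝ) →L[ℝ] ℝ) - proj k)) V := by
  have hslope := (((hasFDerivAt_apply (𝕜 := ℝ) i V).sub (hasFDerivAt_apply k V)).const_smul
    h⁻¹).const_add P
  refine hf.comp_hasFDerivAt V (hslope.congr_of_eventuallyEq (Eventually.of_forall fun U => ?_))
  simp only [Pi.smul_apply, Pi.sub_apply, smul_eq_mul, div_eq_inv_mul]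

lemma Fintype.sum_comp_sub {G M : Type*} [AddGroup G] [Fintype G] [AddCommMonoid M] (c : G)
    (g : G → M) : ∑ j, g (j - c) = ∑ j, g j :=
  (Equiv.subRight c).sum_comp g

variable {N : ℕ} [NeZero N]

lemma hasFDerivAt_discreteG (h P : ℝ) (j : ZMod N) (V : ZMod N → ℝ) :
    HasFDerivAt (discreteG N h P j)
      (min (P + (V (j + 1) - V j) / h) 0 • h⁻¹ •
          ((proj (j + 1) : (ZMod N → ℝ) →L[ℝ] ℝ) - proj j)
        + max (P + (V j - V (j - 1)) / h) 0 • h⁻¹ •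
          ((proj j : (ZMod N → ℝ) →L[ℝ] ℝ) - proj (j - 1)))
      V :=
  ((hasFDerivAt_comp_slope (hasDerivAt_half_sq_min_zero _)).add
    (hasFDerivAt_comp_slope (hasDerivAt_half_sq_max_zero _))).sub_const _

lemma discreteG_sub_sub_fderiv (h P : ℝ) (j : ZMod N) (U V : ZMod N → ℝ) :
    discreteG N h P j U - discreteG N h P j V - fderiv ℝ (discreteG N h P j) V (U - V)
      = bregman (fun t => 1 / 2 * min t 0 ^ 2) (fun t => min t 0)
          (P + (U (j + 1) - U j) / h) (P + (V (j + 1) - V j) / h)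
        + bregman (fun t => 1 / 2 * max t 0 ^ 2) (fun t => max t 0)
          (P + (U j - U (j - 1)) / h) (P + (V j - V (j - 1)) / h) := by
  rw [(hasFDerivAt_discreteG h P j V).fderiv]
  simp only [discreteG, bregman, add_apply, smul_apply,
    sub_apply, ContinuousLinearMap.proj_apply, Pi.sub_apply, smul_eq_mul]
  ring

theorem sum_discreteG_sub_sub_fderiv (h P : ℝ) (U V : ZMod N → ℝ) :
    ∑ j, (discreteG N h P j U - discreteG N h P j V - fderiv ℝ (discreteG N h P j) V (U - V))
      = 1 / 2 * ∑ j, ((U (j + 1) - U j) / h - (V (j + 1) - V j) / h) ^ 2 := by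
  set D : (ZMod N → ℝ) → ZMod N → ℝ := fun W j => P + (W (j + 1) - W j) / h
  set φ := bregman (fun t => 1 / 2 * min t 0 ^ 2) (fun t => min t 0)
  set ψ := bregman (fun t => 1 / 2 * max t 0 ^ 2) (fun t => max t 0)
  have hD : ∀ W j, P + (W j - W (j - 1)) / h = D W (j - 1) := fun W j => by
    simp only [D, sub_add_cancel]
  calc _ = ∑ j, φ (D U j) (D V j) + ∑ j, ψ (D U (j - 1)) (D V (j - 1)) := by
        simp only [discreteG_sub_sub_fderiv, hD, sum_add_distrib]
        rfl
    _ = ∑ j, (φ (D U j) (D V j) + ψ (D U j) (D V j)) := by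
        rw [Fintype.sum_comp_sub 1 fun j => ψ (D U j) (D V j), sum_add_distrib]
    _ = ∑ j, 1 / 2 * (D U j - D V j) ^ 2 := by
        simp only [φ, ψ, bregman_half_sq_min_zero_add_max_zero]
    _ = _ := by
        rw [mul_sum]
        exact sum_congr rfl fun j _ => by ring

theorem discreteG_differentiable_bregman_identity_and_poincare_general
    (N : ℕ) [NeZero N] (P h : ℝ) :
    (∀ j : ZMod N, Differentiable ℝ (discreteG N h P j)) ∧
    (∀ U V : ZMod N → ℝ,
      (∑ j : ZMod N,
          (discreteG N h P j U - discreteG N h P j V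
            - fderiv ℝ (discreteG N h P j) V (U - V)))
        = (1 / 2) * ∑ j : ZMod N,
            ((U j - U (j - 1)) / h - (V j - V (j - 1)) / h) ^ 2) ∧
    (∀ U V : ZMod N → ℝ,
      ∑ j : ZMod N, ((U j - U (j + 1)) / h - (V j - V (j + 1)) / h) ^ 2
        ≤ 2 * ∑ j : ZMod N,
            (discreteG N h P j U - discreteG N h P j V
              - fderiv ℝ (discreteG N h P j) V (U - V))) := by
  refine ⟨fun j V => (hasFDerivAt_discreteG h P j V).differentiableAt, fun U V => ?_,
    fun U V => ?_⟩
  · rw [sum_discreteG_sub_sub_fderiv, ← Fintype.sum_comp_sub 1]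
    simp only [sub_add_cancel]
  · rw [sum_discreteG_sub_sub_fderiv, ← mul_assoc, mul_one_div_cancel two_ne_zero, one_mul]
    exact (sum_congr rfl fun j _ => by ring).le

/-- with `h = 1/N` and grid points `x_j = j/N`, each `G_j` is differentiable,
the sum of the Bregman divergences of the `G_j` equals
`(1/2) ∑_j ((u_j − u_{j−1})/h − (v_j − v_{j−1})/h)²`, and in particular the numerical
Poincaré inequality holds with constant `ϱ = 2`. -/
theorem discreteG_differentiable_bregman_identity_and_poincare
    (N : ℕ) [NeZero N] (P h : ℝ) (hh : h = 1 / (N : ℝ)) :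
    (∀ j : ZMod N, Differentiable ℝ (discreteG N h P j)) ∧
    (∀ U V : ZMod N → ℝ,
      (∑ j : ZMod N,
          (discreteG N h P j U - discreteG N h P j V
            - fderiv ℝ (discreteG N h P j) V (U - V)))
        = (1 / 2) * ∑ j : ZMod N,
            ((U j - U (j - 1)) / h - (V j - V (j - 1)) / h) ^ 2) ∧
    (∀ U V : ZMod N → ℝ,
      ∑ j : ZMod N, ((U j - U (j + 1)) / h - (V j - V (j + 1)) / h) ^ 2
        ≤ 2 * ∑ j : ZMod N,
            (discreteG N h P j U - discreteG N h P j V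
              - fderiv ℝ (discreteG N h P j) V (U - V))) :=
  discreteG_differentiable_bregman_identity_and_poincare_general N P h
end

section
/- Let d = 2, H(x,p) = |p|²/2 for x ∈ ℝ², p ∈ ℝ², and P = (1, 0). For every continuously differentiable function f : ℝ → ℝ, the pair m(x₁, x₂) = f(x₂), u ≡ 0 satisfies |P + D_x u(x)|²/2 = 1/2 for all x ∈ ℝ² and div_x(m(x)(P + D_x u(x))) = 0 for all x ∈ ℝ². In particular, taking f 1-periodic, nonnegative, with ∫₀¹ f = 1, one obtains infinitely many distinct ℤ²-periodic solutions m of the system H(x, P + D_x u) = H̄, div(m D_p H(x, P + D_x u)) = 0 with H̄ = 1/2 and u = 0; hence the projected Mather measure of this system is not unique. -/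
open MeasureTheory

/-- The spatial gradient `(D_x f)(x)`, computed componentwise via `fderiv`. -/
noncomputable def pgrad {d : ℕ} (f : (Fin d → ℝ) → ℝ) (x : Fin d → ℝ) : Fin d → ℝ :=
  fun i => fderiv ℝ f x (Pi.single i 1)

/-- The divergence of a vector field `V` at `x`. -/
noncomputable def pdiv {d : ℕ} (V : (Fin d → ℝ) → (Fin d → ℝ)) (x : Fin d → ℝ) : ℝ :=
  ∑ i, fderiv ℝ (fun y => V y i) x (Pi.single i 1)

/-- `ℤ^d`-periodicity of a function on `ℝ^d`. -/
def ZPeriodic {d : ℕ} (f : (Fin d → ℝ) → ℝ) : Prop :=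
  ∀ (z : Fin d → ℤ) (x : Fin d → ℝ), f (x + fun i => (z i : ℝ)) = f x

/-!
With `u ≡ 0` the momentum `P + D_x u = (1, 0)` is constant, so `H = 1/2` everywhere, and the
flux `m (1, 0)` of a density `m` depending only on `x₂` is divergence free: it points across
the direction in which `m` varies. The densities `1 + c cos (2π x₂)`, `0 ≤ c ≤ 1`, are
pairwise distinct, `ℤ²`-periodic, nonnegative and of mass one.
-/

open Real Set

section Calculus

variable {d : ℕ}

@[simp]
lemma pgrad_const (c : ℝ) (x : Fin d → ℝ) : pgrad (fun _ : Fin d → ℝ => c) x = 0 := by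
  ext i
  simp [pgrad]

@[simp]
lemma pgrad_half_sum_sq (q : Fin d → ℝ) :
    pgrad (fun p : Fin d → ℝ => (∑ j, p j ^ 2) / 2) q = q := by
  have h := HasFDerivAt.fun_sum (u := Finset.univ) fun j _ =>
    (hasFDerivAt_apply (𝕜 := ℝ) j q).pow 2
  ext i
  simp [pgrad, div_eq_mul_inv, (h.mul_const 2⁻¹).fderiv, Pi.single_apply]

/-- Only the `j`-th partial derivative of `y ↦ g (y j)` can be nonzero; it multiplies `v j`. -/
lemma pdiv_shear {g : ℝ → ℝ} {j : Fin d} {v : Fin d → ℝ} (hv : v j = 0) (x : Fin d → ℝ)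
    (hg : DifferentiableAt ℝ g (x j)) : pdiv (fun y i => g (y j) * v i) x = 0 := by
  have hG : HasFDerivAt (fun y : Fin d → ℝ => g (y j))
      (deriv g (x j) • ContinuousLinearMap.proj j) x :=
    hg.hasDerivAt.comp_hasFDerivAt x (hasFDerivAt_apply (𝕜 := ℝ) j x)
  simp [pdiv, fun i => (hG.mul_const (v i)).fderiv, Pi.single_apply, hv]

end Calculus

lemma zPeriodic_comp_apply {d : ℕ} {g : ℝ → ℝ} (hg : Function.Periodic g 1) (j : Fin d) :
    ZPeriodic fun x : Fin d → ℝ => g (x j) := by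
  intro z x
  simpa using hg.int_mul (z j) (x j)

lemma setIntegral_unitCube_comp_apply {ι : Type*} [Fintype ι] (j : ι) {g : ℝ → ℝ}
    (hg : AEStronglyMeasurable g (volume.restrict (Icc 0 1))) :
    ∫ x in Icc (0 : ι → ℝ) 1, g (x j) = ∫ t in Icc 0 1, g t := by
  have : IsProbabilityMeasure (volume.restrict (Icc (0 : ℝ) 1)) := ⟨by simp⟩
  rw [← pi_univ_Icc, volume_pi, Measure.restrict_pi_pi]
  exact integral_comp_eval hg

noncomputable def cosineDensity (c t : ℝ) : ℝ := 1 + c * cos (2 * π * t)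

lemma cosineDensity_periodic (c : ℝ) : Function.Periodic (cosineDensity c) 1 := by
  intro t
  simp [cosineDensity, mul_add, cos_add_two_pi]

lemma cosineDensity_nonneg {c : ℝ} (hc : |c| ≤ 1) (t : ℝ) : 0 ≤ cosineDensity c t := by
  have : |c * cos (2 * π * t)| ≤ 1 := by
    rw [abs_mul]
    exact mul_le_one₀ hc (abs_nonneg _) (abs_cos_le_one _)
  unfold cosineDensity
  linarith [neg_abs_le (c * cos (2 * π * t))]

lemma differentiable_cosineDensity (c : ℝ) : Differentiable ℝ (cosineDensity c) := by
  unfold cosineDensity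
  fun_prop

lemma integral_cosineDensity (c : ℝ) : ∫ t in Icc 0 1, cosineDensity c t = 1 := by
  rw [integral_Icc_eq_integral_Ioc, ← intervalIntegral.integral_of_le zero_le_one]
  have hcos : IntervalIntegrable (fun t => cos (2 * π * t)) volume 0 1 :=
    (continuous_cos.comp (continuous_const_mul _)).intervalIntegrable 0 1
  simp only [cosineDensity]
  rw [intervalIntegral.integral_add intervalIntegrable_const (hcos.const_mul c),
    intervalIntegral.integral_const_mul,
    intervalIntegral.integral_comp_mul_left cos two_pi_pos.ne']
  simp

/-- for `d = 2`, `H(x,p) = |p|²/2` and `P = (1,0)`, every `m(x₁,x₂) = f(x₂)`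
with `f` of class `C¹`, together with `u ≡ 0`, solves the cell-problem system with
`H̄ = 1/2`; in particular, the set of `ℤ²`-periodic nonnegative mass-one solutions `m` is
infinite, so the projected Mather measure is not unique. -/
theorem mather_measure_not_unique_2d :
    (∀ f : ℝ → ℝ, ContDiff ℝ 1 f →
      (∀ x : Fin 2 → ℝ,
        (∑ i, ((![1, 0] : Fin 2 → ℝ) i + pgrad (fun _ : Fin 2 → ℝ => (0 : ℝ)) x i) ^ 2) / 2
          = 1 / 2) ∧
      (∀ x : Fin 2 → ℝ,
        pdiv (fun y i =>
          f (y 1) * ((![1, 0] : Fin 2 → ℝ) i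
            + pgrad (fun _ : Fin 2 → ℝ => (0 : ℝ)) y i)) x = 0)) ∧
    Set.Infinite {m : (Fin 2 → ℝ) → ℝ |
      ZPeriodic m ∧ (∀ x, 0 ≤ m x) ∧
      (∫ x in Set.Icc (0 : Fin 2 → ℝ) 1, m x) = 1 ∧
      (∀ x : Fin 2 → ℝ,
        (∑ i, ((![1, 0] : Fin 2 → ℝ) i + pgrad (fun _ : Fin 2 → ℝ => (0 : ℝ)) x i) ^ 2) / 2
          = 1 / 2) ∧
      (∀ x : Fin 2 → ℝ,
        pdiv (fun y i =>
          m y * pgrad (fun p : Fin 2 → ℝ => (∑ j, p j ^ 2) / 2)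
            ((![1, 0] : Fin 2 → ℝ) + pgrad (fun _ : Fin 2 → ℝ => (0 : ℝ)) y) i) x = 0)} := by
  have hH : ∀ x : Fin 2 → ℝ,
      (∑ i, ((![1, 0] : Fin 2 → ℝ) i + pgrad (fun _ : Fin 2 → ℝ => (0 : ℝ)) x i) ^ 2) / 2
        = 1 / 2 := by
    simp
  refine ⟨fun f hf => ⟨hH, fun x => ?_⟩, ?_⟩
  · simpa using pdiv_shear (j := 1) (v := ![1, 0]) rfl x (hf.differentiable one_ne_zero _)
  · let m : ℝ → (Fin 2 → ℝ) → ℝ := fun c x => cosineDensity c (x 1)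
    have hm : InjOn m (Icc 0 1) := fun c _ c' _ h => by
      simpa [m, cosineDensity] using congrFun h 0
    refine ((Icc_infinite zero_lt_one).image hm).mono ?_
    rintro _ ⟨c, hc, rfl⟩
    refine ⟨zPeriodic_comp_apply (cosineDensity_periodic c) 1,
      fun x => cosineDensity_nonneg ((abs_of_nonneg hc.1).trans_le hc.2) (x 1), ?_, hH,
      fun x => ?_⟩
    · exact (setIntegral_unitCube_comp_apply 1
        (differentiable_cosineDensity c).continuous.aestronglyMeasurable).trans
        (integral_cosineDensity c)
    · simp only [m, pgrad_const, add_zero, pgrad_half_sum_sq]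
      exact pdiv_shear (j := 1) (v := ![1, 0]) rfl x (differentiable_cosineDensity c _)
end
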